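/- arXiv:cs/9909007 — 5 statements merged into one kernel-verified Lean document; each statement's English description precedes it below -/
import Mathlib

section
/- If a circle C contains four points x₁, x₂, x₃, x₄ lying in that cyclic order on C, with x₁, x₃ in the interior of a set Q and x₂, x₄ in the interior of a set P, then no circle separates P from Q. That is, there is no circle Σ such that the open disk bounded by Σ contains the interior of one of the sets and is disjoint from the interior of the other. -/
/-!
If `Σ = ∂B(σ, ρ)` separated `P` from `Q`, the function `θ ↦ dist (pt θ) σ ^ 2 - ρ ^ 2` would be
negative at two of the four angles and nonnegative at the two interleaved with them.
This function has the form `a + b cos θ + d sin θ`, and the four vectors `(1, cos θᵢ, sin θᵢ)`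
satisfy a linear relation whose coefficients are `3 × 3` minors of alternating signs, all
`4 sin (·/2) sin (·/2) sin (·/2)` with half-angles in `(0, π)`. Evaluating the relation on the
function gives a sum of four terms of one strict sign adding up to `0`.
-/

open Metric Real

/-- The determinant of the rows `(1, cos α, sin α)`, `(1, cos β, sin β)`, `(1, cos γ, sin γ)`. -/
noncomputable def cosSinMinor (α β γ : ℝ) : ℝ :=
  sin (γ - β) - sin (γ - α) + sin (β - α)

lemma sin_two_mul_sub_sin_add_sin_two_mul (u v : ℝ) :
    sin (2 * v) - sin (2 * u + 2 * v) + sin (2 * u) = 4 * sin u * sin v * sin (u + v) := by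
  simp only [sin_add, sin_two_mul, cos_two_mul]
  linear_combination (-(4 * sin v * cos v)) * sin_sq_add_cos_sq u
    + (-(4 * sin u * cos u)) * sin_sq_add_cos_sq v

lemma cosSinMinor_eq (α β γ : ℝ) :
    cosSinMinor α β γ = 4 * sin ((β - α) / 2) * sin ((γ - β) / 2) * sin ((γ - α) / 2) := by
  have h := sin_two_mul_sub_sin_add_sin_two_mul ((β - α) / 2) ((γ - β) / 2)
  rwa [show 2 * ((γ - β) / 2) = γ - β by ring, show 2 * ((β - α) / 2) + (γ - β) = γ - α by ring,
    show 2 * ((β - α) / 2) = β - α by ring, show (β - α) / 2 + (γ - β) / 2 = (γ - α) / 2 by ring]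
    at h

lemma cosSinMinor_pos {α β γ : ℝ} (hαβ : α < β) (hβγ : β < γ) (hγα : γ < α + 2 * π) :
    0 < cosSinMinor α β γ := by
  rw [cosSinMinor_eq]
  have hsin : ∀ {x y : ℝ}, x < y → y < x + 2 * π → 0 < sin ((y - x) / 2) := fun h h' =>
    sin_pos_of_pos_of_lt_pi (by linarith) (by linarith)
  have := hsin hαβ (by linarith)
  have := hsin hβγ (by linarith)
  have := hsin (hαβ.trans hβγ) hγα
  positivity

lemma cosSinMinor_linear_relation (a b d θ₁ θ₂ θ₃ θ₄ : ℝ) :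
    let f := fun θ => a + b * cos θ + d * sin θ
    cosSinMinor θ₂ θ₃ θ₄ * f θ₁ - cosSinMinor θ₁ θ₃ θ₄ * f θ₂
      + cosSinMinor θ₁ θ₂ θ₄ * f θ₃ - cosSinMinor θ₁ θ₂ θ₃ * f θ₄ = 0 := by
  simp only [cosSinMinor, sin_sub]
  ring

lemma not_alternating_sign_cos_sin {a b d θ₁ θ₂ θ₃ θ₄ : ℝ}
    (h12 : θ₁ < θ₂) (h23 : θ₂ < θ₃) (h34 : θ₃ < θ₄) (h41 : θ₄ < θ₁ + 2 * π)
    (h₁ : 0 ≤ a + b * cos θ₁ + d * sin θ₁) (h₂ : a + b * cos θ₂ + d * sin θ₂ < 0)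
    (h₃ : 0 ≤ a + b * cos θ₃ + d * sin θ₃) (h₄ : a + b * cos θ₄ + d * sin θ₄ < 0) : False := by
  have hrel := cosSinMinor_linear_relation a b d θ₁ θ₂ θ₃ θ₄
  have m₁ := cosSinMinor_pos h23 h34 (by linarith)
  have m₂ := cosSinMinor_pos (h12.trans h23) h34 h41
  have m₃ := cosSinMinor_pos h12 (h23.trans h34) h41
  have m₄ := cosSinMinor_pos h12 h23 (by linarith)
  nlinarith [mul_nonneg m₁.le h₁, mul_pos m₂ (neg_pos.mpr h₂),
    mul_nonneg m₃.le h₃, mul_pos m₄ (neg_pos.mpr h₄)]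

lemma dist_circle_point_sq (c σ : EuclideanSpace ℝ (Fin 2)) (r θ : ℝ) :
    dist (c + r • (WithLp.equiv 2 (Fin 2 → ℝ)).symm ![cos θ, sin θ]) σ ^ 2
      = (c 0 - σ 0) ^ 2 + (c 1 - σ 1) ^ 2 + r ^ 2
        + 2 * r * (c 0 - σ 0) * cos θ + 2 * r * (c 1 - σ 1) * sin θ := by
  rw [EuclideanSpace.dist_eq, sq_sqrt (by positivity), Fin.sum_univ_two]
  simp only [WithLp.equiv_symm_apply, PiLp.add_apply, PiLp.smul_apply,
    Matrix.cons_val_zero, Matrix.cons_val_one, smul_eq_mul, Real.dist_eq, sq_abs]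
  linear_combination r ^ 2 * sin_sq_add_cos_sq θ

lemma circle_points_not_alternate_in_ball {c σ : EuclideanSpace ℝ (Fin 2)} {r ρ : ℝ}
    {pt : ℝ → EuclideanSpace ℝ (Fin 2)}
    (hpt : ∀ θ : ℝ, pt θ = c + r • (WithLp.equiv 2 (Fin 2 → ℝ)).symm ![cos θ, sin θ])
    {θ₁ θ₂ θ₃ θ₄ : ℝ}
    (h12 : θ₁ < θ₂) (h23 : θ₂ < θ₃) (h34 : θ₃ < θ₄) (h41 : θ₄ < θ₁ + 2 * π)
    (h₁ : pt θ₁ ∉ ball σ ρ) (h₂ : pt θ₂ ∈ ball σ ρ)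
    (h₃ : pt θ₃ ∉ ball σ ρ) (h₄ : pt θ₄ ∈ ball σ ρ) : False := by
  have hρ : 0 ≤ ρ := dist_nonneg.trans (mem_ball.mp h₂).le
  have hball : ∀ θ, pt θ ∈ ball σ ρ ↔
      (c 0 - σ 0) ^ 2 + (c 1 - σ 1) ^ 2 + r ^ 2 - ρ ^ 2
        + 2 * r * (c 0 - σ 0) * cos θ + 2 * r * (c 1 - σ 1) * sin θ < 0 := by
    intro θ
    rw [mem_ball, ← pow_lt_pow_iff_left₀ dist_nonneg hρ two_ne_zero, hpt,
      dist_circle_point_sq]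
    constructor <;> intro h <;> linarith
  simp only [hball, not_lt] at h₁ h₂ h₃ h₄
  exact not_alternating_sign_cos_sin h12 h23 h34 h41 h₁ h₂ h₃ h₄

theorem no_separating_circle_of_four_alternating_points_general
    (P Q : Set (EuclideanSpace ℝ (Fin 2)))
    (c : EuclideanSpace ℝ (Fin 2)) (r : ℝ)
    (pt : ℝ → EuclideanSpace ℝ (Fin 2))
    (hpt : ∀ θ : ℝ, pt θ = c + r • (WithLp.equiv 2 (Fin 2 → ℝ)).symm ![cos θ, sin θ])
    (θ₁ θ₂ θ₃ θ₄ : ℝ)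
    (h12 : θ₁ < θ₂) (h23 : θ₂ < θ₃) (h34 : θ₃ < θ₄) (h41 : θ₄ < θ₁ + 2 * π)
    (hx₁ : pt θ₁ ∈ interior Q) (hx₂ : pt θ₂ ∈ interior P)
    (hx₃ : pt θ₃ ∈ interior Q) (hx₄ : pt θ₄ ∈ interior P) :
    ¬ ∃ (σ : EuclideanSpace ℝ (Fin 2)) (ρ : ℝ),
        (interior P ⊆ ball σ ρ ∧ interior Q ∩ ball σ ρ = ∅) ∨
        (interior Q ⊆ ball σ ρ ∧ interior P ∩ ball σ ρ = ∅) := by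
  rintro ⟨σ, ρ, ⟨hP, hQ⟩ | ⟨hQ, hP⟩⟩
  · exact circle_points_not_alternate_in_ball hpt h12 h23 h34 h41
      (fun h => hQ.subset ⟨hx₁, h⟩) (hP hx₂) (fun h => hQ.subset ⟨hx₃, h⟩) (hP hx₄)
  · have hperiodic : pt (θ₁ + 2 * π) = pt θ₁ := by
      rw [hpt, hpt, cos_add_two_pi, sin_add_two_pi]
    refine circle_points_not_alternate_in_ball hpt h23 h34 h41 (by linarith)
      (fun h => hP.subset ⟨hx₂, h⟩) (hQ hx₃) (fun h => hP.subset ⟨hx₄, h⟩) ?_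
    exact hperiodic ▸ hQ hx₁

/-- If a circle `C` (center `c`, radius `r`) carries four points `x₁ x₂ x₃ x₄` in
cyclic order (given by increasing angles spanning less than a full turn), with
`x₁, x₃` in the interior of `Q` and `x₂, x₄` in the interior of `P`, then no
circle separates `P` from `Q`. -/
theorem no_separating_circle_of_four_alternating_points
    (P Q : Set (EuclideanSpace ℝ (Fin 2)))
    (c : EuclideanSpace ℝ (Fin 2)) (r : ℝ) (hr : 0 < r)
    (pt : ℝ → EuclideanSpace ℝ (Fin 2))
    (hpt : ∀ θ : ℝ, pt θ = c + r • (WithLp.equiv 2 (Fin 2 → ℝ)).symm ![cos θ, sin θ])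
    (θ₁ θ₂ θ₃ θ₄ : ℝ)
    (h12 : θ₁ < θ₂) (h23 : θ₂ < θ₃) (h34 : θ₃ < θ₄) (h41 : θ₄ < θ₁ + 2 * π)
    (hx₁ : pt θ₁ ∈ interior Q) (hx₂ : pt θ₂ ∈ interior P)
    (hx₃ : pt θ₃ ∈ interior Q) (hx₄ : pt θ₄ ∈ interior P) :
    ¬ ∃ (σ : EuclideanSpace ℝ (Fin 2)) (ρ : ℝ),
        (interior P ⊆ ball σ ρ ∧ interior Q ∩ ball σ ρ = ∅) ∨
        (interior Q ⊆ ball σ ρ ∧ interior P ∩ ball σ ρ = ∅) :=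
  no_separating_circle_of_four_alternating_points_general P Q c r pt hpt θ₁ θ₂ θ₃ θ₄ h12 h23 h34 h41
    hx₁ hx₂ hx₃ hx₄
end

section
/- The center of the smallest enclosing circle of a finite set of points S lies in the convex hull of S ∩ Σ, where Σ is the smallest enclosing circle; consequently, either two points of S on Σ are diametrically opposite, or at least three points of S lie on Σ. -/
/-!
If the center `c` of a minimal enclosing ball were outside the convex hull of the points of `S`
on the sphere, a separating functional would give a direction `v` with `⟪v, x - c⟫ > 0` for all
of them. Moving the center slightly along `v` brings those points strictly inside the ball, and
the interior points stay inside by continuity; as `S` is finite, a smaller radius then suffices.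
In a strictly convex space, a point of a segment equidistant from both ends is its midpoint,
which gives the dichotomy; a single point on the sphere cannot have `c` in its hull as `r ≠ 0`.
-/

open Metric Filter Topology Set RealInnerProductSpace

theorem Set.Finite.exists_lt_subset_closedBall_of_subset_ball {α : Type*} [PseudoMetricSpace α]
    {S : Set α} (hS : S.Finite) {c : α} {r : ℝ} (h : S ⊆ ball c r) :
    ∃ r' < r, S ⊆ closedBall c r' := by
  have : ∀ᶠ r' in 𝓝[<] r, ∀ x ∈ S, dist x c ≤ r' :=
    (hS.eventually_all).2 fun x hx => nhdsWithin_le_nhds (eventually_ge_nhds (h hx))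
  obtain ⟨r', hr', hS'⟩ := (this.and self_mem_nhdsWithin).exists
  exact ⟨r', hS', fun x hx => hr' x hx⟩

section InnerProductSpace

variable {E : Type*} [NormedAddCommGroup E] [InnerProductSpace ℝ E]

theorem exists_inner_sub_pos_of_notMem_convexHull [CompleteSpace E] {T : Set E} (hT : T.Finite)
    {c : E} (hc : c ∉ convexHull ℝ T) : ∃ v : E, ∀ x ∈ T, 0 < ⟪v, x - c⟫ := by
  obtain ⟨f, u, hfc, hfT⟩ := geometric_hahn_banach_point_closed (convex_convexHull ℝ T)
    (hT.isClosed_convexHull (𝕜 := ℝ)) hc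
  refine ⟨(InnerProductSpace.toDual ℝ E).symm f, fun x hx => ?_⟩
  have := hfT x (subset_convexHull ℝ T hx)
  rw [inner_sub_right, InnerProductSpace.toDual_symm_apply, InnerProductSpace.toDual_symm_apply]
  linarith

theorem eventually_dist_add_smul_lt_of_dist_lt {x c : E} {r : ℝ} (v : E) (hx : dist x c < r) :
    ∀ᶠ ε in 𝓝 (0 : ℝ), dist x (c + ε • v) < r := by
  have hcont : Continuous fun ε : ℝ => dist x (c + ε • v) := by fun_prop
  exact (hcont.tendsto' 0 _ (by simp)).eventually_lt_const hx

theorem eventually_dist_add_smul_lt_of_inner_pos {x c v : E} {r : ℝ} (hx : dist x c = r)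
    (hv : 0 < ⟪v, x - c⟫) : ∀ᶠ ε in 𝓝[>] (0 : ℝ), dist x (c + ε • v) < r := by
  have hlim : Tendsto (fun ε : ℝ => 2 * ⟪v, x - c⟫ - ε * ‖v‖ ^ 2) (𝓝 0) (𝓝 (2 * ⟪v, x - c⟫)) :=
    Continuous.tendsto' (by fun_prop) 0 _ (by simp)
  filter_upwards [self_mem_nhdsWithin,
    nhdsWithin_le_nhds (hlim.eventually_const_lt (by positivity))] with ε (hε : 0 < ε) hpos
  have hsq : dist x (c + ε • v) ^ 2 = r ^ 2 - ε * (2 * ⟪v, x - c⟫ - ε * ‖v‖ ^ 2) := by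
    rw [dist_eq_norm, ← hx, dist_eq_norm, show x - (c + ε • v) = (x - c) - ε • v by abel,
      norm_sub_sq_real, inner_smul_right, norm_smul, Real.norm_of_nonneg hε.le,
      real_inner_comm]
    ring
  have hr : 0 ≤ r := hx ▸ dist_nonneg
  exact lt_of_pow_lt_pow_left₀ 2 hr (by nlinarith)

theorem center_mem_convexHull_inter_sphere_of_minimal [CompleteSpace E] {S : Set E}
    (hS : S.Finite) {c : E} {r : ℝ} (hencl : S ⊆ closedBall c r)
    (hmin : ∀ c' r', S ⊆ closedBall c' r' → r ≤ r') :
    c ∈ convexHull ℝ (S ∩ sphere c r) := by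
  by_contra hc
  obtain ⟨v, hv⟩ := exists_inner_sub_pos_of_notMem_convexHull (hS.subset inter_subset_left) hc
  have hmove : ∀ᶠ ε in 𝓝[>] (0 : ℝ), ∀ x ∈ S, dist x (c + ε • v) < r := by
    refine hS.eventually_all.2 fun x hx => ?_
    rcases (mem_closedBall.1 (hencl hx)).lt_or_eq with hlt | heq
    · exact nhdsWithin_le_nhds (eventually_dist_add_smul_lt_of_dist_lt v hlt)
    · exact eventually_dist_add_smul_lt_of_inner_pos heq (hv x ⟨hx, heq⟩)
  obtain ⟨ε, hε⟩ := hmove.exists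
  obtain ⟨r', hr', hS'⟩ := hS.exists_lt_subset_closedBall_of_subset_ball fun x hx => hε x hx
  exact (hmin _ _ hS').not_gt hr'

end InnerProductSpace

theorem exists_eq_midpoint_or_three_of_mem_convexHull {E : Type*} [NormedAddCommGroup E]
    [NormedSpace ℝ E] [StrictConvexSpace ℝ E] {T : Set E} {c : E} {r : ℝ}
    (hc : c ∈ convexHull ℝ T) (hT : T ⊆ sphere c r) (hr : r ≠ 0) :
    (∃ p ∈ T, ∃ q ∈ T, p ≠ q ∧ c = midpoint ℝ p q) ∨
      ∃ p ∈ T, ∃ q ∈ T, ∃ t ∈ T, p ≠ q ∧ q ≠ t ∧ p ≠ t := by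
  have hcT : c ∉ T := fun h => hr (by simpa [eq_comm] using hT h)
  obtain ⟨p, hp⟩ := convexHull_nonempty_iff.1 ⟨c, hc⟩
  obtain ⟨q, hq, hqp⟩ : ∃ q ∈ T, q ≠ p := by
    by_contra! h
    have hcp : c ∈ convexHull ℝ {p} := convexHull_mono h hc
    rw [convexHull_singleton, mem_singleton_iff] at hcp
    exact hcT (hcp ▸ hp)
  by_cases hthree : ∃ t ∈ T, t ≠ p ∧ t ≠ q
  · obtain ⟨t, ht, htp, htq⟩ := hthree
    exact Or.inr ⟨p, hp, q, hq, t, ht, hqp.symm, htq.symm, htp.symm⟩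
  push Not at hthree
  have hseg : c ∈ segment ℝ p q := by
    rw [← convexHull_pair]
    exact convexHull_mono (fun t ht => (em (t = p)).elim Or.inl fun h => Or.inr (hthree t ht h)) hc
  have hpc : dist p c = r := hT hp
  have hqc : dist q c = r := hT hq
  refine Or.inl ⟨p, hp, q, hq, hqp.symm, eq_midpoint_of_dist_eq_half ?_ ?_⟩ <;>
  · linarith [dist_add_dist_of_mem_segment hseg, dist_comm c q]

/-- The center of the smallest enclosing circle of a finite planar set `S` (with
at least two points) lies in the convex hull of the points of `S` on the circle;
consequently either two points of `S` on the circle are diametrically opposite,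
or at least three points of `S` lie on the circle. -/
theorem smallest_enclosing_circle_center_in_hull
    (S : Finset (EuclideanSpace ℝ (Fin 2))) (hcard : 2 ≤ S.card)
    (c : EuclideanSpace ℝ (Fin 2)) (r : ℝ)
    (hencl : (S : Set (EuclideanSpace ℝ (Fin 2))) ⊆ closedBall c r)
    (hmin : ∀ (c' : EuclideanSpace ℝ (Fin 2)) (r' : ℝ),
      (S : Set (EuclideanSpace ℝ (Fin 2))) ⊆ closedBall c' r' → r ≤ r') :
    c ∈ convexHull ℝ ((S : Set (EuclideanSpace ℝ (Fin 2))) ∩ sphere c r) ∧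
      ((∃ p ∈ (S : Set (EuclideanSpace ℝ (Fin 2))) ∩ sphere c r,
          ∃ q ∈ (S : Set (EuclideanSpace ℝ (Fin 2))) ∩ sphere c r,
            p ≠ q ∧ c = midpoint ℝ p q) ∨
        (∃ p ∈ (S : Set (EuclideanSpace ℝ (Fin 2))) ∩ sphere c r,
          ∃ q ∈ (S : Set (EuclideanSpace ℝ (Fin 2))) ∩ sphere c r,
            ∃ t ∈ (S : Set (EuclideanSpace ℝ (Fin 2))) ∩ sphere c r,
              p ≠ q ∧ q ≠ t ∧ p ≠ t)) := by
  have hhull := center_mem_convexHull_inter_sphere_of_minimal S.finite_toSet hencl hmin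
  have hr : r ≠ 0 := by
    rintro rfl
    obtain ⟨p, hp, q, hq, hpq⟩ := Finset.one_lt_card.1 hcard
    rw [closedBall_zero] at hencl
    exact hpq ((hencl hp).trans (hencl hq).symm)
  exact ⟨hhull, exists_eq_midpoint_or_three_of_mem_convexHull hhull inter_subset_right hr⟩
end

section
/- Let S = {s₁, …, s_m} be a finite set of points in the plane with m ≥ 2. The furthest-site Voronoi region FSV(s_i) = {x ∈ ℝ² : dist(x, s_i) ≥ dist(x, s_j) for all j} is nonempty (has nonempty interior) if and only if s_i is a vertex of the convex hull of S. -/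
/-!
A point `x` of the region puts every other site in the closed ball about `x` through `s`; in a
strictly convex space `s` is an extreme point of that ball, so it cannot be a convex combination
of the other sites. Conversely, if `s` is separated from the hull of the other sites by a linear
functional `⟪v, ·⟫`, then moving far from `s` in the direction `-v` brings every other site
strictly closer than `s`, and these strict inequalities define an open set inside the region.
-/

open Metric Filter RealInnerProductSpace

section StrictConvexSpace

variable {E : Type*} [NormedAddCommGroup E] [NormedSpace ℝ E] [StrictConvexSpace ℝ E]

theorem self_mem_extremePoints_closedBall_dist (x s : E) :
    s ∈ (closedBall x (dist s x)).extremePoints ℝ := by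
  rcases eq_or_ne (dist s x) 0 with h | h
  · rw [h, closedBall_zero, extremePoints_singleton, dist_eq_zero.mp h]
    rfl
  · exact StrictConvexSpace.sphere_subset_extremePoints_closedBall x h (mem_sphere.mpr rfl)

theorem mem_of_mem_convexHull_of_subset_closedBall {T : Set E} {x s : E}
    (hT : T ⊆ closedBall x (dist s x)) (hs : s ∈ convexHull ℝ T) : s ∈ T :=
  extremePoints_convexHull_subset <|
    inter_extremePoints_subset_extremePoints_of_subset
      (convexHull_min hT (convex_closedBall x _)) ⟨hs, self_mem_extremePoints_closedBall_dist x s⟩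

end StrictConvexSpace

section InnerProductSpace

variable {E : Type*} [NormedAddCommGroup E] [InnerProductSpace ℝ E]

theorem eventually_dist_sub_smul_lt_dist {v s t : E} (h : 0 < ⟪v, s - t⟫) :
    ∀ᶠ r : ℝ in atTop, dist (s - r • v) t < dist (s - r • v) s := by
  filter_upwards [eventually_gt_atTop (‖s - t‖ ^ 2 / (2 * ⟪v, s - t⟫))] with r hr
  rw [div_lt_iff₀ (by positivity)] at hr
  have hsq : ‖(s - t) - r • v‖ ^ 2 < ‖r • v‖ ^ 2 := by
    rw [norm_sub_sq_real, real_inner_smul_right, real_inner_comm]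
    linarith
  rw [dist_eq_norm, dist_eq_norm, sub_sub_cancel_left, norm_neg, sub_right_comm]
  exact lt_of_pow_lt_pow_left₀ 2 (norm_nonneg _) hsq

theorem exists_forall_dist_lt_dist_of_notMem_convexHull [CompleteSpace E] {T : Set E}
    (hT : T.Finite) {s : E} (hs : s ∉ convexHull ℝ T) :
    ∃ x, ∀ t ∈ T, dist x t < dist x s := by
  obtain ⟨f, u, hfu, hus⟩ :=
    geometric_hahn_banach_closed_point (convex_convexHull ℝ T) (hT.isClosed_convexHull ℝ) hs
  set v := (InnerProductSpace.toDual ℝ E).symm f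
  have hv : ∀ t ∈ T, 0 < ⟪v, s - t⟫ := fun t ht => by
    rw [InnerProductSpace.toDual_symm_apply, map_sub, sub_pos]
    exact (hfu t (subset_convexHull ℝ T ht)).trans hus
  obtain ⟨r, hr⟩ :=
    (hT.eventually_all.mpr fun t ht => eventually_dist_sub_smul_lt_dist (hv t ht)).exists
  exact ⟨s - r • v, hr⟩

end InnerProductSpace

theorem isOpen_setOf_forall_dist_lt_dist {X : Type*} [PseudoMetricSpace X] {T : Set X}
    (hT : T.Finite) (s : X) : IsOpen {x | ∀ t ∈ T, dist x t < dist x s} := by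
  simp only [Set.ofPred_forall]
  exact hT.isOpen_biInter fun t _ =>
    isOpen_lt (continuous_id.dist continuous_const) (continuous_id.dist continuous_const)

theorem fsv_region_nonempty_iff_hull_vertex_general
    (S : Finset (EuclideanSpace ℝ (Fin 2)))
    (s : EuclideanSpace ℝ (Fin 2)) :
    (interior {x : EuclideanSpace ℝ (Fin 2) |
        ∀ t ∈ S, dist x t ≤ dist x s}).Nonempty ↔
      s ∉ convexHull ℝ ((S : Set (EuclideanSpace ℝ (Fin 2))) \ {s}) := by
  have hT : ((S : Set (EuclideanSpace ℝ (Fin 2))) \ {s}).Finite := S.finite_toSet.sdiff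
  constructor
  · rintro ⟨x, hx⟩ hmem
    have hball : (S : Set (EuclideanSpace ℝ (Fin 2))) \ {s} ⊆ closedBall x (dist s x) :=
      fun t ht => by simpa only [mem_closedBall, dist_comm] using interior_subset hx t ht.1
    exact (mem_of_mem_convexHull_of_subset_closedBall hball hmem).2 rfl
  · intro hns
    obtain ⟨x, hx⟩ := exists_forall_dist_lt_dist_of_notMem_convexHull hT hns
    refine ⟨x, (isOpen_setOf_forall_dist_lt_dist hT s).subset_interior_iff.mpr ?_ hx⟩
    intro y hy t ht
    rcases eq_or_ne t s with rfl | hts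
    · exact le_rfl
    · exact (hy t ⟨ht, hts⟩).le

/-- The furthest-site Voronoi region of a site `s` in a finite planar point set
`S` has nonempty interior iff `s` is a vertex of the convex hull of `S`,
i.e. iff `s` is not in the convex hull of the other sites. -/
theorem fsv_region_nonempty_iff_hull_vertex
    (S : Finset (EuclideanSpace ℝ (Fin 2))) (hcard : 2 ≤ S.card)
    (s : EuclideanSpace ℝ (Fin 2)) (hs : s ∈ S) :
    (interior {x : EuclideanSpace ℝ (Fin 2) |
        ∀ t ∈ S, dist x t ≤ dist x s}).Nonempty ↔
      s ∉ convexHull ℝ ((S : Set (EuclideanSpace ℝ (Fin 2))) \ {s}) :=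
  fsv_region_nonempty_iff_hull_vertex_general S s
end

section
/- Let S be a finite set of points in the plane, not all on one line, and let s_i, s_j be distinct points of S such that the segment s_i s_j is not an edge of the convex hull of S but both are on the convex hull and their furthest-site Voronoi regions share a boundary point. Then the set of radii of circles through s_i and s_j enclosing S is bounded above, and the largest such circle passes through a third point s_k of S. -/
/-!
The centres of circles through `sᵢ` and `sⱼ` form the perpendicular bisector, a line `m + t • v`
through the midpoint `m`, along which the squared radius is `dist m sᵢ ^ 2 + t ^ 2 * ‖v‖ ^ 2`.
The circle encloses `s` iff `t * (2 * ⟪v, m - s⟫) ≤ dist m sᵢ ^ 2 - dist m s ^ 2`, so the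
admissible parameters form an intersection of half-lines. Since `sᵢ sⱼ` is not a hull edge, the
coefficients `⟪v, m - s⟫` take both signs on `S`, so this set is a compact interval, nonempty thanks
to the shared Voronoi boundary point, and `t ^ 2` attains its maximum on it. At a maximiser some
constraint with nonzero coefficient is tight, for otherwise the maximiser could move both ways
within the interval; that constraint gives the third point.
-/

open Metric RealInnerProductSpace Module Filter Topology

def feasibleSet {ι : Type*} (S : Finset ι) (g c : ι → ℝ) : Set ℝ :=
  {t | ∀ s ∈ S, t * g s ≤ c s}

section FeasibleSet

variable {ι : Type*} {S : Finset ι} {g c : ι → ℝ}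

lemma isCompact_feasibleSet (hpos : ∃ s ∈ S, 0 < g s) (hneg : ∃ s ∈ S, g s < 0) :
    IsCompact (feasibleSet S g c) := by
  obtain ⟨s₁, hs₁, hg₁⟩ := hpos
  obtain ⟨s₂, hs₂, hg₂⟩ := hneg
  have hclosed : IsClosed (feasibleSet S g c) := by
    have hinter : feasibleSet S g c = ⋂ s ∈ S, {t | t * g s ≤ c s} := by ext; simp [feasibleSet]
    rw [hinter]
    exact isClosed_biInter fun s _ => isClosed_le (by fun_prop) continuous_const
  exact (isCompact_Icc (a := c s₂ / g s₂) (b := c s₁ / g s₁)).of_isClosed_subset hclosed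
    fun t ht => ⟨(div_le_iff_of_neg hg₂).2 (ht s₂ hs₂), (le_div_iff₀ hg₁).2 (ht s₁ hs₁)⟩

lemma exists_mul_eq_of_isMaxOn_sq {t : ℝ} (ht : t ∈ feasibleSet S g c)
    (hmax : IsMaxOn (· ^ 2) (feasibleSet S g c) t) : ∃ s ∈ S, g s ≠ 0 ∧ t * g s = c s := by
  by_contra! hslack
  have hnhds : feasibleSet S g c ∈ 𝓝 t := by
    have : ∀ᶠ u in 𝓝 t, ∀ s ∈ S, g s ≠ 0 → u * g s < c s := by
      refine (eventually_all_finset S).2 fun s hs => ?_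
      by_cases hg : g s = 0
      · exact Eventually.of_forall fun _ h => absurd hg h
      · have hlt := lt_of_le_of_ne (ht s hs) (hslack s hs hg)
        exact ((continuous_id.mul continuous_const).continuousAt.eventually_lt
          continuousAt_const hlt).mono fun _ hu _ => hu
    filter_upwards [this] with u hu s hs
    by_cases hg : g s = 0
    · simpa [hg] using ht s hs
    · exact (hu s hs hg).le
  obtain ⟨ε, hε, hball⟩ := Metric.mem_nhds_iff.1 hnhds
  have h₁ : (t + ε / 2) ^ 2 ≤ t ^ 2 := hmax (hball (by simp [abs_of_pos, hε]))
  have h₂ : (t - ε / 2) ^ 2 ≤ t ^ 2 := hmax (hball (by simp [abs_of_pos, hε]))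
  nlinarith

end FeasibleSet

section Bisector

variable {V : Type*} [NormedAddCommGroup V] [InnerProductSpace ℝ V]

lemma dist_add_smul_sq (m v s : V) (t : ℝ) :
    dist (m + t • v) s ^ 2 = dist m s ^ 2 + t * (2 * ⟪v, m - s⟫) + t ^ 2 * ‖v‖ ^ 2 := by
  rw [dist_eq_norm, dist_eq_norm, add_sub_right_comm, norm_add_sq_real, inner_smul_right,
    norm_smul, mul_pow, Real.norm_eq_abs, sq_abs, real_inner_comm]
  ring

variable {m v a : V}

lemma dist_add_smul_le_dist_iff (ha : ⟪v, m - a⟫ = 0) (t : ℝ) (s : V) :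
    dist (m + t • v) s ≤ dist (m + t • v) a ↔
      t * (2 * ⟪v, m - s⟫) ≤ dist m a ^ 2 - dist m s ^ 2 := by
  rw [← sq_le_sq₀ dist_nonneg dist_nonneg, dist_add_smul_sq, dist_add_smul_sq, ha]
  constructor <;> intro h <;> linarith

lemma dist_add_smul_eq_dist_iff (ha : ⟪v, m - a⟫ = 0) (t : ℝ) (s : V) :
    dist (m + t • v) s = dist (m + t • v) a ↔
      t * (2 * ⟪v, m - s⟫) = dist m a ^ 2 - dist m s ^ 2 := by
  rw [← sq_eq_sq₀ dist_nonneg dist_nonneg, dist_add_smul_sq, dist_add_smul_sq, ha]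
  constructor <;> intro h <;> linarith

lemma dist_add_smul_le_dist_add_smul_iff (ha : ⟪v, m - a⟫ = 0) (hv : v ≠ 0) (t u : ℝ) :
    dist (m + t • v) a ≤ dist (m + u • v) a ↔ t ^ 2 ≤ u ^ 2 := by
  have hv2 : 0 < ‖v‖ ^ 2 := by positivity
  rw [← sq_le_sq₀ dist_nonneg dist_nonneg, dist_add_smul_sq, dist_add_smul_sq, ha]
  constructor <;> intro h <;> nlinarith

lemma exists_inner_sub_neg_of_not_supporting {S : Set V} {b w : V} (hw : w ≠ 0)
    (ha : ⟪w, m - a⟫ = 0) (hb : ⟪w, m - b⟫ = 0)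
    (hS : ¬ ∃ (f : V →L[ℝ] ℝ) (α : ℝ), f ≠ 0 ∧ f a = α ∧ f b = α ∧ ∀ t ∈ S, f t ≤ α) :
    ∃ s ∈ S, ⟪w, m - s⟫ < 0 := by
  by_contra! h
  refine hS ⟨innerSL ℝ w, ⟪w, m⟫, fun h0 => hw ?_, ?_, ?_, fun t ht => ?_⟩
  · simpa using DFunLike.congr_fun h0 w
  · simpa [inner_sub_right, sub_eq_zero, eq_comm] using ha
  · simpa [inner_sub_right, sub_eq_zero, eq_comm] using hb
  · simpa [inner_sub_right] using h t ht

lemma isCompact_feasibleSet_of_not_supporting {S : Finset V} {b : V} (c : V → ℝ) (hv : v ≠ 0)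
    (ha : ⟪v, m - a⟫ = 0) (hb : ⟪v, m - b⟫ = 0)
    (hS : ¬ ∃ (f : V →L[ℝ] ℝ) (α : ℝ), f ≠ 0 ∧ f a = α ∧ f b = α ∧ ∀ t ∈ S, f t ≤ α) :
    IsCompact (feasibleSet S (fun s => 2 * ⟪v, m - s⟫) c) := by
  obtain ⟨s₁, hs₁, h₁⟩ := exists_inner_sub_neg_of_not_supporting (neg_ne_zero.2 hv)
    (by simpa using ha) (by simpa using hb) hS
  obtain ⟨s₂, hs₂, h₂⟩ := exists_inner_sub_neg_of_not_supporting hv ha hb hS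
  rw [inner_neg_left, neg_lt_zero] at h₁
  exact isCompact_feasibleSet ⟨s₁, hs₁, by positivity⟩ ⟨s₂, hs₂, by linarith⟩

lemma subset_closedBall_add_smul_iff (ha : ⟪v, m - a⟫ = 0) (S : Finset V) (t : ℝ) :
    ↑S ⊆ closedBall (m + t • v) (dist (m + t • v) a) ↔
      t ∈ feasibleSet S (fun s => 2 * ⟪v, m - s⟫) (fun s => dist m a ^ 2 - dist m s ^ 2) := by
  simp only [Set.subset_def, Finset.mem_coe, mem_closedBall', dist_add_smul_le_dist_iff ha]
  rfl

lemma exists_eq_midpoint_add_smul_of_dist_eq [Fact (finrank ℝ V = 2)] {a b : V} (hab : a ≠ b) :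
    ∃ v ≠ 0, ⟪v, midpoint ℝ a b - a⟫ = 0 ∧ ⟪v, midpoint ℝ a b - b⟫ = 0 ∧
      ∀ z, dist z a = dist z b → ∃ t : ℝ, z = midpoint ℝ a b + t • v := by
  have hba : b - a ≠ 0 := sub_ne_zero.2 hab.symm
  have : FiniteDimensional ℝ V := .of_fact_finrank_eq_succ 1
  obtain ⟨⟨v, hvK⟩, hv⟩ := finrank_pos_iff_exists_ne_zero.1
    ((Submodule.finrank_orthogonal_span_singleton (𝕜 := ℝ) (n := 1) hba).symm ▸ one_pos)
  have hvba : ⟪b - a, v⟫ = 0 := Submodule.mem_orthogonal_singleton_iff_inner_right.1 hvK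
  refine ⟨v, by simpa using hv, ?_, ?_, fun z hz => ?_⟩
  · rw [midpoint_sub_left, real_inner_smul_right, real_inner_comm, hvba, mul_zero]
  · rw [midpoint_sub_right, real_inner_smul_right, ← neg_sub, inner_neg_right, real_inner_comm,
      hvba, neg_zero, mul_zero]
  · have hzm : ⟪b - a, z - midpoint ℝ a b⟫ = 0 :=
      AffineSubspace.mem_perpBisector_iff_inner_eq_zero'.1
        (AffineSubspace.mem_perpBisector_iff_dist_eq.2 hz)
    obtain ⟨t, ht⟩ := Submodule.mem_span_singleton.1
      (Submodule.mem_span_singleton_of_inner_eq_zero_of_inner_eq_zero hba (by simpa using hv)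
        hzm hvba)
    exact ⟨t, by rw [ht]; abel⟩

end Bisector

theorem largest_enclosing_circle_through_third_point_general
    (S : Finset (EuclideanSpace ℝ (Fin 2)))
    (si sj : EuclideanSpace ℝ (Fin 2)) (hij : si ≠ sj)
    -- `sᵢ sⱼ` is not a convex hull edge of `S`:
    (hnotedge : ¬ ∃ (f : EuclideanSpace ℝ (Fin 2) →L[ℝ] ℝ) (a : ℝ), f ≠ 0 ∧
        f si = a ∧ f sj = a ∧ ∀ t ∈ S, f t ≤ a)
    -- their furthest-site Voronoi regions share a boundary point:
    (hshare : ∃ x : EuclideanSpace ℝ (Fin 2), dist x si = dist x sj ∧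
        ∀ t ∈ S, dist x t ≤ dist x si) :
    BddAbove {r : ℝ | ∃ z : EuclideanSpace ℝ (Fin 2),
        dist z si = r ∧ dist z sj = r ∧
        (S : Set (EuclideanSpace ℝ (Fin 2))) ⊆ closedBall z r} ∧
      ∃ r ∈ {r : ℝ | ∃ z : EuclideanSpace ℝ (Fin 2),
          dist z si = r ∧ dist z sj = r ∧
          (S : Set (EuclideanSpace ℝ (Fin 2))) ⊆ closedBall z r},
        (∀ r' ∈ {r : ℝ | ∃ z : EuclideanSpace ℝ (Fin 2),
            dist z si = r ∧ dist z sj = r ∧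
            (S : Set (EuclideanSpace ℝ (Fin 2))) ⊆ closedBall z r}, r' ≤ r) ∧
        ∀ z : EuclideanSpace ℝ (Fin 2),
          dist z si = r → dist z sj = r →
          (S : Set (EuclideanSpace ℝ (Fin 2))) ⊆ closedBall z r →
          ∃ sk ∈ S, sk ≠ si ∧ sk ≠ sj ∧ dist z sk = r := by
  have : Fact (finrank ℝ (EuclideanSpace ℝ (Fin 2)) = 2) := ⟨finrank_euclideanSpace_fin⟩
  obtain ⟨v, hv, hmi, hmj, hline⟩ := exists_eq_midpoint_add_smul_of_dist_eq hij
  set m := midpoint ℝ si sj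
  set F := feasibleSet S (fun s => 2 * ⟪v, m - s⟫) (fun s => dist m si ^ 2 - dist m s ^ 2)
  have hcenter : ∀ z, dist z si = dist z sj → ↑S ⊆ closedBall z (dist z si) →
      ∃ t ∈ F, z = m + t • v := by
    intro z hz hS
    obtain ⟨t, rfl⟩ := hline z hz
    exact ⟨t, (subset_closedBall_add_smul_iff hmi S t).1 hS, rfl⟩
  have hF : IsCompact F := isCompact_feasibleSet_of_not_supporting _ hv hmi hmj hnotedge
  obtain ⟨x, hxij, hxS⟩ := hshare
  obtain ⟨t₀, rfl⟩ := hline x hxij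
  have ht₀ : t₀ ∈ F :=
    (subset_closedBall_add_smul_iff hmi S t₀).1 fun s hs => mem_closedBall'.2 (hxS s hs)
  obtain ⟨t, htF, htmax⟩ := hF.exists_isMaxOn ⟨t₀, ht₀⟩ (continuous_pow 2).continuousOn
  have hsj_dist : dist (m + t • v) sj = dist (m + t • v) si :=
    (dist_add_smul_eq_dist_iff hmi t sj).2 (by
      rw [hmj, mul_zero, mul_zero, dist_midpoint_left, dist_midpoint_right, sub_self])
  refine ⟨⟨_, ?ub⟩, _, ⟨m + t • v, rfl, hsj_dist, (subset_closedBall_add_smul_iff hmi S t).2 htF⟩,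
    ?ub, ?_⟩
  · rintro r ⟨z, rfl, hzj, hS⟩
    obtain ⟨u, huF, rfl⟩ := hcenter _ hzj.symm hS
    exact (dist_add_smul_le_dist_add_smul_iff hmi hv u t).2 (htmax huF)
  intro z hzi hzj hS
  obtain ⟨u, huF, rfl⟩ := hcenter z (hzi.trans hzj.symm) (hzi ▸ hS)
  have humax : IsMaxOn (· ^ 2) F u := fun w hw =>
    (htmax hw).trans ((dist_add_smul_le_dist_add_smul_iff hmi hv t u).1 hzi.ge)
  obtain ⟨sk, hsk, hgk, htight⟩ := exists_mul_eq_of_isMaxOn_sq huF humax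
  refine ⟨sk, hsk, ?_, ?_, ?_⟩
  · rintro rfl; exact hgk (by simp [hmi])
  · rintro rfl; exact hgk (by simp [hmj])
  · rw [← hzi]; exact (dist_add_smul_eq_dist_iff hmi u sk).2 htight

/-- If `sᵢ sⱼ` is not an edge of the convex hull of the finite planar set `S`
(the points of `S` are not all on one line), while `sᵢ` and `sⱼ` are vertices of
the hull and their furthest-site Voronoi regions share a boundary point (some
point is furthest from both simultaneously), then the radii of circles through
`sᵢ` and `sⱼ` enclosing `S` are bounded above, there is a largest such circle,
and every largest such circle passes through a third point of `S`. -/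
theorem largest_enclosing_circle_through_third_point
    (S : Finset (EuclideanSpace ℝ (Fin 2)))
    (si sj : EuclideanSpace ℝ (Fin 2)) (hij : si ≠ sj)
    (hsi : si ∈ S) (hsj : sj ∈ S)
    (hnotline : ¬ Collinear ℝ (S : Set (EuclideanSpace ℝ (Fin 2))))
    -- `sᵢ sⱼ` is not a convex hull edge of `S`:
    (hnotedge : ¬ ∃ (f : EuclideanSpace ℝ (Fin 2) →L[ℝ] ℝ) (a : ℝ), f ≠ 0 ∧
        f si = a ∧ f sj = a ∧ ∀ t ∈ S, f t ≤ a)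
    -- `sᵢ`, `sⱼ` are vertices of the convex hull of `S`:
    (hvi : si ∉ convexHull ℝ ((S : Set (EuclideanSpace ℝ (Fin 2))) \ {si}))
    (hvj : sj ∉ convexHull ℝ ((S : Set (EuclideanSpace ℝ (Fin 2))) \ {sj}))
    -- their furthest-site Voronoi regions share a boundary point:
    (hshare : ∃ x : EuclideanSpace ℝ (Fin 2), dist x si = dist x sj ∧
        ∀ t ∈ S, dist x t ≤ dist x si) :
    BddAbove {r : ℝ | ∃ z : EuclideanSpace ℝ (Fin 2),
        dist z si = r ∧ dist z sj = r ∧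
        (S : Set (EuclideanSpace ℝ (Fin 2))) ⊆ closedBall z r} ∧
      ∃ r ∈ {r : ℝ | ∃ z : EuclideanSpace ℝ (Fin 2),
          dist z si = r ∧ dist z sj = r ∧
          (S : Set (EuclideanSpace ℝ (Fin 2))) ⊆ closedBall z r},
        (∀ r' ∈ {r : ℝ | ∃ z : EuclideanSpace ℝ (Fin 2),
            dist z si = r ∧ dist z sj = r ∧
            (S : Set (EuclideanSpace ℝ (Fin 2))) ⊆ closedBall z r}, r' ≤ r) ∧
        ∀ z : EuclideanSpace ℝ (Fin 2),
          dist z si = r → dist z sj = r →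
          (S : Set (EuclideanSpace ℝ (Fin 2))) ⊆ closedBall z r →
          ∃ sk ∈ S, sk ≠ si ∧ sk ≠ sj ∧ dist z sk = r :=
  largest_enclosing_circle_through_third_point_general S si sj hij hnotedge hshare
end

section
/- Let C₁ and C₂ be homothets of a fixed strictly convex closed curve (i.e., images of the boundary of a fixed compact strictly convex body K under dilations and translations with positive ratio). If C₁ ≠ C₂ as sets, then C₁ ∩ C₂ contains at most two points. -/
/-!
Pulling both curves back to `∂K`, a common point corresponds to an `x ∈ ∂K` with `g x ∈ ∂K`,
where `g x = μ • x + w` is not the identity. The line through `x` and `g x` is mapped to itself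
by `g`, which acts on its affine parameter as `t ↦ 1 + μ * t`; since `x` and `g x` lie on `∂K`,
strict convexity leaves no other point `q` of this line with `q, g q ∈ K`.

If `g` fixes a point of `K`, that point lies on all these lines, so it is the only such `x`.
Otherwise, of any three such points one has its line crossing the chord joining the other two
(the signed areas `ω (g a - a) (b - a)` are antisymmetric in `a, b`, so they cannot all have the
wrong sign). By convexity the crossing point `q` has `q, g q ∈ K`, so it is that point, which then
lies strictly inside a chord of `K`: impossible on the boundary.
-/

open AffineMap Set Module

theorem Set.exists_subset_pair_of_forall_eq_or {α : Type*} [Nonempty α] {s : Set α}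
    (h : ∀ x ∈ s, ∀ y ∈ s, ∀ z ∈ s, x = y ∨ x = z ∨ y = z) : ∃ a b, s ⊆ {a, b} := by
  rcases s.eq_empty_or_nonempty with rfl | ⟨a, ha⟩
  · exact ⟨Classical.arbitrary α, Classical.arbitrary α, empty_subset _⟩
  by_cases hb : ∃ b ∈ s, b ≠ a
  · obtain ⟨b, hb, hba⟩ := hb
    refine ⟨a, b, fun x hx => ?_⟩
    rcases h x hx a ha b hb with hxa | hxb | hab
    exacts [.inl hxa, .inr hxb, absurd hab.symm hba]
  · push Not at hb
    exact ⟨a, a, fun x hx => .inl (hb x hx)⟩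

theorem exists_mul_nonpos_of_antisymm {α : Type*} (F : α → α → ℝ)
    (hF : ∀ a b, F b a = -F a b) (a b c : α) :
    F a b * F a c ≤ 0 ∨ F b a * F b c ≤ 0 ∨ F c a * F c b ≤ 0 := by
  rw [hF a b, hF a c, hF b c]
  -- the three products multiply to `-(F a b * F a c * F b c) ^ 2`
  by_contra! h
  nlinarith [mul_pos (mul_pos h.1 h.2.1) h.2.2, sq_nonneg (F a b * F a c * F b c)]

theorem LinearMap.exists_mem_segment_eq_of_mul_nonpos {V : Type*} [AddCommGroup V]
    [Module ℝ V] (f : V →ₗ[ℝ] ℝ) {x y : V} {c : ℝ} (h : (f x - c) * (f y - c) ≤ 0) :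
    ∃ q ∈ segment ℝ x y, f q = c := by
  have hcont : Continuous fun s : ℝ => f (lineMap x y s) := by
    simp only [lineMap_apply_module, map_add, map_smul, smul_eq_mul]
    fun_prop
  have hc : c ∈ uIcc (f (lineMap x y (0 : ℝ))) (f (lineMap x y (1 : ℝ))) := by
    rw [lineMap_apply_zero, lineMap_apply_one, mem_uIcc]
    rcases mul_nonpos_iff.1 h with h | h
    · right; constructor <;> linarith
    · left; constructor <;> linarith
  obtain ⟨s, hs, hfs⟩ := intermediate_value_uIcc hcont.continuousOn hc
  rw [uIcc_of_le zero_le_one] at hs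
  exact ⟨lineMap x y s, segment_eq_image_lineMap ℝ x y ▸ mem_image_of_mem _ hs, hfs⟩

section StrictConvex

variable {E : Type*} [AddCommGroup E] [Module ℝ E] {μ : ℝ} {w : E}

theorem smul_lineMap_add (p : E) (t : ℝ) :
    μ • lineMap p (μ • p + w) t + w = lineMap p (μ • p + w) (1 + μ * t) := by
  simp only [lineMap_apply_module]
  module

theorem smul_add_mem_segment {x y z : E} (h : z ∈ segment ℝ x y) :
    μ • z + w ∈ segment ℝ (μ • x + w) (μ • y + w) := by
  obtain ⟨a, b, ha, hb, hab, rfl⟩ := h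
  exact ⟨a, b, ha, hb, hab, by linear_combination (norm := module) hab • w⟩

variable [TopologicalSpace E] {L : Set E}

theorem StrictConvex.not_sbtw_of_mem_frontier (hL : StrictConvex ℝ L) {x y p : E}
    (hx : x ∈ L) (hy : y ∈ L) (hp : p ∈ frontier L) : ¬Sbtw ℝ x p y := fun h =>
  hp.2 <| hL.openSegment_subset hx hy h.left_ne_right <| by
    rw [openSegment_eq_image_lineMap]
    exact h.mem_image_Ioo

theorem StrictConvex.eq_zero_of_lineMap_mem (hL : StrictConvex ℝ L) (hLc : IsClosed L)
    (hμ : 0 < μ) {p : E} (hp : p ∈ frontier L) (hgp : μ • p + w ∈ frontier L)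
    (hne : p ≠ μ • p + w) {t : ℝ} (hq : lineMap p (μ • p + w) t ∈ L)
    (hgq : μ • lineMap p (μ • p + w) t + w ∈ L) : t = 0 := by
  have hsbtw {a b c : ℝ} (hab : a < b) (hbc : b < c) :
      Sbtw ℝ (lineMap p (μ • p + w) a) (lineMap p (μ • p + w) b) (lineMap p (μ • p + w) c) :=
    (lineMap_injective ℝ hne).sbtw_map_iff.2 (.of_lt_of_lt hab hbc)
  rw [smul_lineMap_add] at hgq
  rcases lt_trichotomy t 0 with ht | ht | ht
  · refine absurd (hsbtw ht zero_lt_one) ?_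
    rw [lineMap_apply_zero, lineMap_apply_one]
    exact hL.not_sbtw_of_mem_frontier hq (hLc.frontier_subset hgp) hp
  · exact ht
  · refine absurd (hsbtw zero_lt_one (lt_add_of_pos_right 1 (mul_pos hμ ht))) ?_
    rw [lineMap_apply_zero, lineMap_apply_one]
    exact hL.not_sbtw_of_mem_frontier (hLc.frontier_subset hp) hgq hgp

theorem StrictConvex.eq_or_eq_of_lineMap_mem_segment (hL : StrictConvex ℝ L)
    (hLc : IsClosed L) (hμ : 0 < μ) {p₁ p₂ p₃ : E} (h₁ : p₁ ∈ L) (hg₁ : μ • p₁ + w ∈ L)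
    (h₃ : p₃ ∈ L) (hg₃ : μ • p₃ + w ∈ L) (h₂ : p₂ ∈ frontier L)
    (hg₂ : μ • p₂ + w ∈ frontier L) (hne : p₂ ≠ μ • p₂ + w) {t : ℝ}
    (ht : lineMap p₂ (μ • p₂ + w) t ∈ segment ℝ p₁ p₃) : p₂ = p₁ ∨ p₂ = p₃ := by
  have ht0 : t = 0 := hL.eq_zero_of_lineMap_mem hLc hμ h₂ hg₂ hne
    (hL.convex.segment_subset h₁ h₃ ht)
    (hL.convex.segment_subset hg₁ hg₃ (smul_add_mem_segment ht))
  rw [ht0, lineMap_apply_zero] at ht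
  by_contra! h
  exact hL.not_sbtw_of_mem_frontier h₁ h₃ h₂ ⟨mem_segment_iff_wbtw.1 ht, h.1, h.2⟩

theorem StrictConvex.frontier_inter_preimage_subset_singleton (hL : StrictConvex ℝ L)
    (hLc : IsClosed L) (hμ : 0 < μ) (hμ1 : μ ≠ 1) {c : E} (hcL : c ∈ L) (hc : μ • c + w = c) :
    frontier L ∩ (fun x => μ • x + w) ⁻¹' frontier L ⊆ {c} := by
  rintro x ⟨hx, hgx⟩
  have hw : w = c - μ • c := eq_sub_of_add_eq' hc
  have h1μ : 1 - μ ≠ 0 := sub_ne_zero.2 hμ1.symm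
  have hcx : lineMap x (μ • x + w) (1 - μ)⁻¹ = c := by
    rw [lineMap_apply_module, hw]
    match_scalars
    all_goals field_simp
    all_goals ring
  by_contra hxc
  have hne : x ≠ μ • x + w := by
    intro h
    rw [hw] at h
    have : (1 - μ) • (x - c) = 0 := by linear_combination (norm := module) h
    exact hxc (sub_eq_zero.1 ((smul_eq_zero.1 this).resolve_left h1μ))
  exact inv_ne_zero h1μ <|
    hL.eq_zero_of_lineMap_mem hLc hμ hx hgx hne (hcx ▸ hcL) (by rw [hcx, hc]; exact hcL)

end StrictConvex

section Plane

variable {E : Type*} [NormedAddCommGroup E] [InnerProductSpace ℝ E] [Fact (finrank ℝ E = 2)]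

namespace Orientation

variable (o : Orientation ℝ E (Fin 2))

theorem exists_eq_smul_of_areaForm_eq_zero {a x : E} (ha : a ≠ 0)
    (h : o.areaForm a x = 0) : ∃ t : ℝ, x = t • a := by
  refine ⟨inner ℝ a x / ‖a‖ ^ 2, ext_inner_right ℝ fun y => ?_⟩
  have key := o.inner_mul_inner_add_areaForm_mul_areaForm a x y
  rw [h, zero_mul, add_zero] at key
  rw [real_inner_smul_left]
  field_simp
  linarith

theorem areaForm_smul_add_sub_swap (μ : ℝ) (w a b : E) :
    o.areaForm (μ • b + w - b) (a - b) = -o.areaForm (μ • a + w - a) (b - a) := by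
  simp only [map_add, map_sub, map_smul, LinearMap.add_apply, LinearMap.sub_apply,
    LinearMap.smul_apply, smul_eq_mul, o.areaForm_apply_self]
  rw [o.areaForm_swap b a]
  ring

theorem exists_lineMap_mem_segment_of_mul_nonpos {μ : ℝ} {w p x y : E}
    (hp : p ≠ μ • p + w)
    (h : o.areaForm (μ • p + w - p) (x - p) * o.areaForm (μ • p + w - p) (y - p) ≤ 0) :
    ∃ t : ℝ, lineMap p (μ • p + w) t ∈ segment ℝ x y := by
  rw [map_sub (o.areaForm _) x p, map_sub (o.areaForm _) y p] at h
  obtain ⟨q, hq, hqp⟩ := (o.areaForm (μ • p + w - p)).exists_mem_segment_eq_of_mul_nonpos h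
  obtain ⟨t, ht⟩ := o.exists_eq_smul_of_areaForm_eq_zero (sub_ne_zero.2 hp.symm)
    (by rw [map_sub, hqp, sub_self] : o.areaForm (μ • p + w - p) (q - p) = 0)
  refine ⟨t, ?_⟩
  rwa [lineMap_apply_module', ← ht, sub_add_cancel]

end Orientation

theorem exists_lineMap_mem_segment (μ : ℝ) (w : E) {p₁ p₂ p₃ : E}
    (h₁ : p₁ ≠ μ • p₁ + w) (h₂ : p₂ ≠ μ • p₂ + w) (h₃ : p₃ ≠ μ • p₃ + w) :
    (∃ t : ℝ, lineMap p₁ (μ • p₁ + w) t ∈ segment ℝ p₂ p₃) ∨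
      (∃ t : ℝ, lineMap p₂ (μ • p₂ + w) t ∈ segment ℝ p₁ p₃) ∨
      (∃ t : ℝ, lineMap p₃ (μ • p₃ + w) t ∈ segment ℝ p₁ p₂) := by
  have : FiniteDimensional ℝ E := .of_fact_finrank_eq_two
  let o : Orientation ℝ E (Fin 2) := (finBasisOfFinrankEq ℝ E Fact.out).orientation
  rcases exists_mul_nonpos_of_antisymm (fun a b => o.areaForm (μ • a + w - a) (b - a))
    (o.areaForm_smul_add_sub_swap μ w) p₁ p₂ p₃ with h | h | h
  · exact .inl (o.exists_lineMap_mem_segment_of_mul_nonpos h₁ h)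
  · exact .inr (.inl (o.exists_lineMap_mem_segment_of_mul_nonpos h₂ h))
  · exact .inr (.inr (o.exists_lineMap_mem_segment_of_mul_nonpos h₃ h))

theorem StrictConvex.exists_frontier_inter_preimage_subset_pair {L : Set E}
    (hL : StrictConvex ℝ L) (hLc : IsClosed L) {μ : ℝ} {w : E} (hμ : 0 < μ)
    (hμw : μ ≠ 1 ∨ w ≠ 0) :
    ∃ a b, frontier L ∩ (fun x => μ • x + w) ⁻¹' frontier L ⊆ {a, b} := by
  by_cases hfix : ∃ c ∈ L, μ • c + w = c
  · obtain ⟨c, hcL, hc⟩ := hfix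
    have hμ1 : μ ≠ 1 := by
      rintro rfl
      exact hμw.resolve_left (not_not.2 rfl) (by simpa using hc)
    refine ⟨c, c, ?_⟩
    simpa using hL.frontier_inter_preimage_subset_singleton hLc hμ hμ1 hcL hc
  push Not at hfix
  have hmem {p : E} (hp : p ∈ frontier L) : p ∈ L := hLc.frontier_subset hp
  have hne {p : E} (hp : p ∈ frontier L) : p ≠ μ • p + w := (hfix p (hmem hp)).symm
  have hmid {a b c : E} (ha : a ∈ frontier L ∧ μ • a + w ∈ frontier L)
      (hb : b ∈ frontier L ∧ μ • b + w ∈ frontier L) (hc : c ∈ frontier L ∧ μ • c + w ∈ frontier L)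
      (h : ∃ t : ℝ, lineMap b (μ • b + w) t ∈ segment ℝ a c) : b = a ∨ b = c :=
    h.elim fun _ ht => hL.eq_or_eq_of_lineMap_mem_segment hLc hμ (hmem ha.1) (hmem ha.2)
      (hmem hc.1) (hmem hc.2) hb.1 hb.2 (hne hb.1) ht
  apply Set.exists_subset_pair_of_forall_eq_or
  rintro p₁ h₁ p₂ h₂ p₃ h₃
  rcases exists_lineMap_mem_segment μ w (hne h₁.1) (hne h₂.1) (hne h₃.1) with h | h | h
  · have := hmid h₂ h₁ h₃ h
    tauto
  · have := hmid h₁ h₂ h₃ h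
    tauto
  · have := hmid h₁ h₃ h₂ h
    tauto

end Plane

theorem homothets_of_strictly_convex_boundary_inter_at_most_two_general
    (K : Set (EuclideanSpace ℝ (Fin 2)))
    (hK : IsCompact K)
    (hKstrict : StrictConvex ℝ K)
    (lam₁ lam₂ : ℝ) (hlam₁ : 0 < lam₁) (hlam₂ : 0 < lam₂)
    (t₁ t₂ : EuclideanSpace ℝ (Fin 2))
    (C₁ C₂ : Set (EuclideanSpace ℝ (Fin 2)))
    (hC₁ : C₁ = (fun x => lam₁ • x + t₁) '' frontier K)
    (hC₂ : C₂ = (fun x => lam₂ • x + t₂) '' frontier K)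
    (hne : C₁ ≠ C₂) :
    ∃ a b : EuclideanSpace ℝ (Fin 2), C₁ ∩ C₂ ⊆ {a, b} := by
  subst hC₁ hC₂
  have : Fact (finrank ℝ (EuclideanSpace ℝ (Fin 2)) = 2) := ⟨finrank_euclideanSpace_fin⟩
  have hμw : lam₁ / lam₂ ≠ 1 ∨ lam₂⁻¹ • (t₁ - t₂) ≠ 0 := by
    by_contra! h
    have hlam : lam₁ = lam₂ := (div_eq_one_iff_eq hlam₂.ne').1 h.1
    have ht : t₁ = t₂ :=
      sub_eq_zero.1 ((smul_eq_zero.1 h.2).resolve_left (inv_ne_zero hlam₂.ne'))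
    exact hne (by rw [hlam, ht])
  obtain ⟨a, b, hab⟩ :=
    hKstrict.exists_frontier_inter_preimage_subset_pair hK.isClosed (div_pos hlam₁ hlam₂) hμw
  refine ⟨lam₁ • a + t₁, lam₁ • b + t₁, ?_⟩
  rintro _ ⟨⟨x, hx, rfl⟩, ⟨y, hy, hxy⟩⟩
  have hyx : (lam₁ / lam₂) • x + lam₂⁻¹ • (t₁ - t₂) = y := by
    rw [← inv_smul_smul₀ hlam₂.ne' y, eq_sub_iff_add_eq.2 hxy]
    module
  rcases hab ⟨hx, mem_preimage.2 (hyx ▸ hy)⟩ with rfl | rfl <;> simp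

/-- Two distinct homothets (positive-ratio scaled translates) of the boundary of
a fixed compact strictly convex planar body intersect in at most two points. -/
theorem homothets_of_strictly_convex_boundary_inter_at_most_two
    (K : Set (EuclideanSpace ℝ (Fin 2)))
    (hK : IsCompact K) (hKconv : Convex ℝ K)
    (hKstrict : StrictConvex ℝ K) (hKint : (interior K).Nonempty)
    (lam₁ lam₂ : ℝ) (hlam₁ : 0 < lam₁) (hlam₂ : 0 < lam₂)
    (t₁ t₂ : EuclideanSpace ℝ (Fin 2))
    (C₁ C₂ : Set (EuclideanSpace ℝ (Fin 2)))
    (hC₁ : C₁ = (fun x => lam₁ • x + t₁) '' frontier K)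
    (hC₂ : C₂ = (fun x => lam₂ • x + t₂) '' frontier K)
    (hne : C₁ ≠ C₂) :
    ∃ a b : EuclideanSpace ℝ (Fin 2), C₁ ∩ C₂ ⊆ {a, b} :=
  homothets_of_strictly_convex_boundary_inter_at_most_two_general K hK hKstrict lam₁ lam₂ hlam₁
    hlam₂ t₁ t₂ C₁ C₂ hC₁ hC₂ hne
end
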